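/- Let p ≥ 0 be an integer, n > 0 real with n ≠ 1, and κ ∈ ℂ with κ ≠ 0, F_p(κ, n) = 0, J_p(κ) ≠ 0 and J_p(√n·κ) ≠ 0. Then the implicit-derivative quotient satisfies −(∂_n F_p(κ, n))/(∂_κ F_p(κ, n)) = −(n·κ² − p²)/(2n·(n − 1)·κ) − (κ·J_p'(κ)²)/(2n·(n − 1)·J_p(κ)²). -/

import Mathlib

open Complex Real Filter Set

/-- Bessel function of the first kind of integer order `p`. -/
noncomputable def besselJ (p : ℕ) (z : ℂ) : ℂ :=
  ∑' m : ℕ, ((-1 : ℂ) ^ m / ((Nat.factorial m : ℂ) * (Nat.factorial (m + p) : ℂ)))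
    * (z / 2) ^ (2 * m + p)

/-- Derivative of the Bessel function. -/
noncomputable def besselJ' (p : ℕ) (z : ℂ) : ℂ := deriv (besselJ p) z

/-- The ITE determinant function `F_p(κ, n)`. -/
noncomputable def Fp (p : ℕ) (κ : ℂ) (n : ℝ) : ℂ :=
  κ * (besselJ' p κ * besselJ p ((Real.sqrt n : ℂ) * κ)
    - (Real.sqrt n : ℂ) * besselJ p κ * besselJ' p ((Real.sqrt n : ℂ) * κ))

/-! Differentiating the Bessel series termwise and using the recursion
`4 (m + 1) (m + 1 + p) c_{m+1} = -c_m` of its coefficients gives Bessel's equation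
`z² J_p'' + z J_p' + (z² - p²) J_p = 0`. It eliminates `J_p''` from both partial derivatives of
`F_p`: for `κ ≠ 0` one gets `∂_κ F_p = (n - 1) κ J_p(κ) J_p(√n κ)`, and at a root, where
`J_p'(κ) J_p(√n κ) = √n J_p(κ) J_p'(√n κ)`, also
`2 n J_p(κ) ∂_n F_p = (κ² J_p'(κ)² + (n κ² - p²) J_p(κ)²) J_p(√n κ)`.
Dividing the two gives the formula. -/

section PowerSeries

variable {a : ℕ → ℂ} {e : ℕ → ℕ}

-- Also for `k < 2`, where the exponents are truncated but the factor `k (k - 1)` vanishes.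
lemma sq_mul_natCast_mul_pow_sub_two_add (k : ℕ) (z : ℂ) :
    z ^ 2 * (k * (k - 1 : ℕ) * z ^ (k - 1 - 1)) + z * (k * z ^ (k - 1)) = k ^ 2 * z ^ k := by
  rcases k with _ | _ | k
  · simp
  · simp
  · simp only [Nat.add_sub_cancel]
    push_cast
    ring

lemma summable_norm_mul_natCast_mul_pow_sub_one (ha : ∀ r : ℝ, Summable fun m => ‖a m‖ * r ^ e m)
    (r : ℝ) : Summable fun m => ‖a m * e m‖ * r ^ (e m - 1) := by
  set R := |r| + 1
  have hR : 1 ≤ R := le_add_of_nonneg_left (abs_nonneg r)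
  refine .of_norm_bounded (ha (2 * R)) fun m => ?_
  have hk : (e m : ℝ) ≤ 2 ^ e m := by exact_mod_cast (Nat.lt_two_pow_self).le
  have hr : |r| ^ (e m - 1) ≤ R ^ e m :=
    (pow_le_pow_left₀ (abs_nonneg r) (le_add_of_nonneg_right zero_le_one) _).trans
      (pow_le_pow_right₀ hR (Nat.sub_le _ _))
  simp only [norm_mul, abs_norm, norm_pow, Complex.norm_natCast, Real.norm_eq_abs, Nat.abs_cast,
    mul_pow, mul_assoc]
  gcongr

lemma summable_mul_pow (ha : ∀ r : ℝ, Summable fun m => ‖a m‖ * r ^ e m) (z : ℂ) :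
    Summable fun m => a m * z ^ e m :=
  .of_norm_bounded (ha ‖z‖) fun m => by rw [norm_mul, norm_pow]

lemma hasDerivAt_tsum_mul_pow (ha : ∀ r : ℝ, Summable fun m => ‖a m‖ * r ^ e m) (z : ℂ) :
    HasDerivAt (fun w => ∑' m, a m * w ^ e m) (∑' m, a m * e m * z ^ (e m - 1)) z := by
  set R := ‖z‖ + 1
  have hderiv : ∀ m y, y ∈ Metric.ball (0 : ℂ) R →
      HasDerivAt (fun w => a m * w ^ e m) (a m * e m * y ^ (e m - 1)) y := fun m y _ => by
    simpa only [mul_assoc] using (hasDerivAt_pow (e m) y).const_mul (a m)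
  have hbound : ∀ m y, y ∈ Metric.ball (0 : ℂ) R →
      ‖a m * e m * y ^ (e m - 1)‖ ≤ ‖a m * e m‖ * R ^ (e m - 1) := fun m y hy => by
    rw [norm_mul, norm_pow]
    gcongr
    exact (mem_ball_zero_iff.1 hy).le
  exact hasDerivAt_tsum_of_isPreconnected (summable_norm_mul_natCast_mul_pow_sub_one ha R)
    Metric.isOpen_ball (convex_ball (0 : ℂ) R).isPreconnected hderiv hbound
    (Metric.mem_ball_self (by positivity)) (summable_mul_pow ha 0)
    (mem_ball_zero_iff.2 (lt_add_one _))

lemma hasSum_deriv_tsum_mul_pow (ha : ∀ r : ℝ, Summable fun m => ‖a m‖ * r ^ e m) (z : ℂ) :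
    HasSum (fun m => a m * e m * z ^ (e m - 1)) (deriv (fun w => ∑' m, a m * w ^ e m) z) :=
  (hasDerivAt_tsum_mul_pow ha z).deriv ▸
    (summable_mul_pow (summable_norm_mul_natCast_mul_pow_sub_one ha) z).hasSum

lemma differentiable_tsum_mul_pow (ha : ∀ r : ℝ, Summable fun m => ‖a m‖ * r ^ e m) :
    Differentiable ℂ fun w => ∑' m, a m * w ^ e m :=
  fun z => (hasDerivAt_tsum_mul_pow ha z).differentiableAt

end PowerSeries

section Bessel

open Nat

variable (p : ℕ)

noncomputable def besselCoeff (m : ℕ) : ℂ := (-1) ^ m / (m ! * (m + p)! * 2 ^ (2 * m + p))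

lemma besselJ_eq_tsum : besselJ p = fun z => ∑' m, besselCoeff p m * z ^ (2 * m + p) := by
  funext z
  refine tsum_congr fun m => ?_
  rw [besselCoeff, div_pow]
  ring

lemma besselCoeff_succ (m : ℕ) :
    4 * (m + 1) * (m + 1 + p) * besselCoeff p (m + 1) = -besselCoeff p m := by
  have hm : (m + 1 + p)! = (m + 1 + p) * (m + p)! := by
    rw [show m + 1 + p = m + p + 1 by omega, Nat.factorial_succ]
  simp only [besselCoeff, Nat.factorial_succ, hm, show 2 * (m + 1) + p = 2 * m + p + 2 by omega,
    pow_add, pow_succ]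
  have h1 : (m : ℂ) + 1 ≠ 0 := Nat.cast_add_one_ne_zero m
  have h2 : (m : ℂ) + 1 + p ≠ 0 := by exact_mod_cast (show m + 1 + p ≠ 0 by omega)
  have h3 : (m ! : ℂ) ≠ 0 := by exact_mod_cast m.factorial_ne_zero
  have h4 : ((m + p)! : ℂ) ≠ 0 := by exact_mod_cast (m + p).factorial_ne_zero
  push_cast
  field_simp
  ring

lemma summable_norm_besselCoeff_mul_pow (r : ℝ) :
    Summable fun m => ‖besselCoeff p m‖ * r ^ (2 * m + p) := by
  refine .of_norm_bounded ((Real.summable_pow_div_factorial (r ^ 2)).mul_left (|r| ^ p))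
    fun m => ?_
  have hcoeff : ‖besselCoeff p m‖ ≤ 1 / m ! := by
    rw [besselCoeff, norm_div, norm_pow, norm_neg, norm_one, one_pow]
    gcongr
    simp only [norm_mul, norm_pow, Complex.norm_natCast, Complex.norm_ofNat]
    calc (m ! : ℝ) = m ! * 1 * 1 := by ring
      _ ≤ m ! * (m + p)! * 2 ^ (2 * m + p) := by
        gcongr
        · exact_mod_cast Nat.one_le_iff_ne_zero.2 (Nat.factorial_ne_zero _)
        · exact one_le_pow₀ one_le_two
  rw [norm_mul, norm_norm, norm_pow, Real.norm_eq_abs, pow_add, pow_mul, sq_abs]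
  calc ‖besselCoeff p m‖ * ((r ^ 2) ^ m * |r| ^ p) ≤ 1 / m ! * ((r ^ 2) ^ m * |r| ^ p) := by
        gcongr
    _ = |r| ^ p * ((r ^ 2) ^ m / m !) := by ring

lemma hasSum_besselJ (z : ℂ) :
    HasSum (fun m => besselCoeff p m * z ^ (2 * m + p)) (besselJ p z) := by
  rw [besselJ_eq_tsum]
  exact (summable_mul_pow (summable_norm_besselCoeff_mul_pow p) z).hasSum

lemma hasSum_besselJ' (z : ℂ) :
    HasSum (fun m => besselCoeff p m * (2 * m + p : ℕ) * z ^ (2 * m + p - 1)) (besselJ' p z) := by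
  rw [besselJ', besselJ_eq_tsum]
  exact hasSum_deriv_tsum_mul_pow (summable_norm_besselCoeff_mul_pow p) z

lemma besselJ'_eq_tsum :
    besselJ' p = fun z => ∑' m, besselCoeff p m * (2 * m + p : ℕ) * z ^ (2 * m + p - 1) :=
  funext fun z => (hasSum_besselJ' p z).tsum_eq.symm

lemma hasSum_deriv_besselJ' (z : ℂ) :
    HasSum (fun m => besselCoeff p m * (2 * m + p : ℕ) * (2 * m + p - 1 : ℕ)
      * z ^ (2 * m + p - 1 - 1)) (deriv (besselJ' p) z) := by
  rw [besselJ'_eq_tsum]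
  exact hasSum_deriv_tsum_mul_pow
    (summable_norm_mul_natCast_mul_pow_sub_one (summable_norm_besselCoeff_mul_pow p)) z

lemma differentiable_besselJ : Differentiable ℂ (besselJ p) := by
  rw [besselJ_eq_tsum]
  exact differentiable_tsum_mul_pow (summable_norm_besselCoeff_mul_pow p)

lemma differentiable_besselJ' : Differentiable ℂ (besselJ' p) := by
  rw [besselJ'_eq_tsum]
  exact differentiable_tsum_mul_pow
    (summable_norm_mul_natCast_mul_pow_sub_one (summable_norm_besselCoeff_mul_pow p))

theorem besselJ_ode (z : ℂ) :
    z ^ 2 * deriv (besselJ' p) z + z * besselJ' p z + (z ^ 2 - p ^ 2) * besselJ p z = 0 := by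
  -- `(2m + p)² - p² = 4 m (m + p)`, and by `besselCoeff_succ` the shifted series is `-z² J_p`.
  have hS : HasSum (fun m => 4 * m * (m + p) * besselCoeff p m * z ^ (2 * m + p))
      (z ^ 2 * deriv (besselJ' p) z + z * besselJ' p z - p ^ 2 * besselJ p z) := by
    refine ((((hasSum_deriv_besselJ' p z).mul_left (z ^ 2)).add
      ((hasSum_besselJ' p z).mul_left z)).sub
        ((hasSum_besselJ p z).mul_left ((p : ℂ) ^ 2))).congr_fun fun m => ?_
    have h := sq_mul_natCast_mul_pow_sub_two_add (2 * m + p) z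
    push_cast at h ⊢
    linear_combination -besselCoeff p m * h
  have hshift := (hasSum_nat_add_iff' 1).mpr hS
  simp only [Finset.range_one, Finset.sum_singleton, Nat.cast_zero, mul_zero, zero_mul, sub_zero,
    Nat.cast_add_one] at hshift
  have hS' : HasSum (fun m => -(z ^ 2 * (besselCoeff p m * z ^ (2 * m + p))))
      (z ^ 2 * deriv (besselJ' p) z + z * besselJ' p z - p ^ 2 * besselJ p z) := by
    refine hshift.congr_fun fun m => ?_
    rw [show 2 * (m + 1) + p = 2 * m + p + 2 by omega, pow_add]
    linear_combination -(z ^ (2 * m + p) * z ^ 2) * besselCoeff_succ p m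
  linear_combination hS'.unique ((hasSum_besselJ p z).mul_left (z ^ 2)).neg

end Bessel

section Fp

variable (p : ℕ) (n : ℝ) (κ : ℂ)

lemma hasDerivAt_Fp_left :
    HasDerivAt (fun z => Fp p z n)
      (besselJ' p κ * besselJ p (√n * κ) - √n * besselJ p κ * besselJ' p (√n * κ)
        + κ * (deriv (besselJ' p) κ * besselJ p (√n * κ)
          - √n ^ 2 * besselJ p κ * deriv (besselJ' p) (√n * κ))) κ := by
  have hscale : HasDerivAt (fun z : ℂ => √n * z) (√n) κ := by
    simpa using (hasDerivAt_id κ).const_mul (√n : ℂ)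
  have hJ := (differentiable_besselJ p _).hasDerivAt.comp κ hscale
  have hJ' := (differentiable_besselJ' p _).hasDerivAt.comp κ hscale
  have h := (hasDerivAt_id κ).mul (((differentiable_besselJ' p κ).hasDerivAt.mul hJ).sub
    (((differentiable_besselJ p κ).hasDerivAt.const_mul (√n : ℂ)).mul hJ'))
  refine h.congr_deriv ?_
  simp only [besselJ', id, Function.comp_apply, Pi.mul_apply, Pi.sub_apply]
  ring

lemma hasDerivAt_Fp_right (hn : 0 < n) :
    HasDerivAt (fun t : ℝ => Fp p κ t)
      (κ / (2 * √n) * (κ * besselJ' p κ * besselJ' p (√n * κ) - besselJ p κ * besselJ' p (√n * κ)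
        - √n * κ * besselJ p κ * deriv (besselJ' p) (√n * κ))) n := by
  have hsqrt : HasDerivAt (fun t : ℝ => (√t : ℂ)) ((1 / (2 * √n) : ℝ) : ℂ) n :=
    (Real.hasDerivAt_sqrt hn.ne').ofReal_comp
  have hmul : HasDerivAt (fun s : ℂ => s * κ) κ (√n) := by
    simpa using (hasDerivAt_id (√n : ℂ)).mul_const κ
  have hJ := (differentiable_besselJ p _).hasDerivAt.comp (√n : ℂ) hmul
  have hJ' := (differentiable_besselJ' p _).hasDerivAt.comp (√n : ℂ) hmul
  have hG := ((hJ.const_mul (besselJ' p κ)).sub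
    (((hasDerivAt_id (√n : ℂ)).mul_const (besselJ p κ)).mul hJ')).const_mul κ
  refine (hG.comp n hsqrt).congr_deriv ?_
  simp only [besselJ', id, Function.comp_apply]
  push_cast
  ring

variable {p n κ}

lemma deriv_Fp_left (hn : 0 ≤ n) (hκ : κ ≠ 0) :
    deriv (fun z => Fp p z n) κ = (n - 1) * κ * besselJ p κ * besselJ p (√n * κ) := by
  have hs : (√n : ℂ) ^ 2 = n := by exact_mod_cast Real.sq_sqrt hn
  rw [(hasDerivAt_Fp_left p n κ).deriv]
  refine mul_left_cancel₀ hκ ?_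
  linear_combination besselJ p (√n * κ) * besselJ_ode p κ - besselJ p κ * besselJ_ode p (√n * κ)
    + κ ^ 2 * besselJ p κ * besselJ p (√n * κ) * hs

lemma deriv_Fp_right_of_root (hn : 0 < n) (hκ : κ ≠ 0) (hF : Fp p κ n = 0) :
    2 * n * besselJ p κ * deriv (fun t : ℝ => Fp p κ t) n
      = (κ ^ 2 * besselJ' p κ ^ 2 + (n * κ ^ 2 - p ^ 2) * besselJ p κ ^ 2)
        * besselJ p (√n * κ) := by
  have hs : (√n : ℂ) ^ 2 = n := by exact_mod_cast Real.sq_sqrt hn.le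
  have hs0 : (√n : ℂ) ≠ 0 := by exact_mod_cast (Real.sqrt_pos.2 hn).ne'
  have hcross : besselJ' p κ * besselJ p (√n * κ) - √n * besselJ p κ * besselJ' p (√n * κ) = 0 :=
    (mul_eq_zero.1 hF).resolve_left hκ
  have hfactor : 2 * n * besselJ p κ * (κ / (2 * √n)) = √n * κ * besselJ p κ := by
    rw [← hs]
    field_simp
  rw [(hasDerivAt_Fp_right p n κ hn).deriv, ← mul_assoc, hfactor]
  linear_combination -besselJ p κ ^ 2 * besselJ_ode p (√n * κ)
    - κ ^ 2 * besselJ' p κ * hcross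
    + κ ^ 2 * besselJ p κ ^ 2 * besselJ p (√n * κ) * hs

end Fp

/-- the implicit-derivative quotient `κ'_n` at a root of `F_p`. -/
theorem stmt_5 (p : ℕ) (n : ℝ) (hn : 0 < n) (hn1 : n ≠ 1) (κ : ℂ) (hκ : κ ≠ 0)
    (hF : Fp p κ n = 0) (hJ : besselJ p κ ≠ 0)
    (hJn : besselJ p ((Real.sqrt n : ℂ) * κ) ≠ 0) :
    -(deriv (fun t : ℝ => Fp p κ t) n) / (deriv (fun z : ℂ => Fp p z n) κ)
      = -(((n : ℂ) * κ ^ 2 - (p : ℂ) ^ 2) / (2 * (n : ℂ) * ((n : ℂ) - 1) * κ))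
        - κ * (besselJ' p κ) ^ 2 / (2 * (n : ℂ) * ((n : ℂ) - 1) * (besselJ p κ) ^ 2) := by
  have hn0 : (n : ℂ) ≠ 0 := by exact_mod_cast hn.ne'
  have hn10 : (n : ℂ) - 1 ≠ 0 := sub_ne_zero.2 (by exact_mod_cast hn1)
  have hright : deriv (fun t : ℝ => Fp p κ t) n
      = (κ ^ 2 * besselJ' p κ ^ 2 + (n * κ ^ 2 - p ^ 2) * besselJ p κ ^ 2)
        * besselJ p (√n * κ) / (2 * n * besselJ p κ) := by
    rw [eq_div_iff (by simp [hn0, hJ]), ← deriv_Fp_right_of_root hn hκ hF]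
    ring
  rw [deriv_Fp_left hn.le hκ, hright, div_eq_iff (by simp [hn10, hκ, hJ, hJn])]
  field_simp
  ring
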